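/- arXiv:2107.14004 — 4 statements merged into one kernel-verified Lean document; each statement's English description precedes it below -/
import Mathlib

section
/- Under Assumptions (i) and (ii), the second-step estimator is √T-consistent: √T(θ̂⁰_T − θ⁰*) = O_p(1) as T → ∞, i.e. for every δ > 0 there is M > 0 with limsup_{T→∞} P(√T |θ̂⁰_T − θ⁰*| > M) < δ. -/
open MeasureTheory Filter
open scoped ENNReal NNReal

noncomputable section

/-- The setting of the P-O (penalized-to-ordinary) estimation procedure:
a probability space, open bounded convex parameter sets `Θ0 ⊆ ℝ^{p₀}` and
`N0 ⊆ ℝ^{n₀}`, a true value `θstar ∈ cl Θ0` with nonempty active set `J¹` and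
zero set `J⁰`, first-step estimators `θtil, νtil`, tuning constants
`q ∈ (0,1]`, `γ > -(1-q)`, positive deterministic sequences `α, ε`, and a
second-step estimator `(θhat, νhat)`. -/
structure POSetting (Ω : Type) [MeasurableSpace Ω] (p₀ n₀ : ℕ) where
  P : Measure Ω
  probP : IsProbabilityMeasure P
  Θ0 : Set (EuclideanSpace ℝ (Fin p₀))
  N0 : Set (EuclideanSpace ℝ (Fin n₀))
  Θ0_open : IsOpen Θ0
  Θ0_bdd : Bornology.IsBounded Θ0
  Θ0_conv : Convex ℝ Θ0
  N0_open : IsOpen N0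
  N0_bdd : Bornology.IsBounded N0
  N0_conv : Convex ℝ N0
  θstar : EuclideanSpace ℝ (Fin p₀)
  θstar_mem : θstar ∈ closure Θ0
  J0_ne : ∃ j, θstar j = 0
  J1_ne : ∃ j, θstar j ≠ 0
  θtil : ℝ → Ω → EuclideanSpace ℝ (Fin p₀)
  νtil : ℝ → Ω → EuclideanSpace ℝ (Fin n₀)
  θtil_meas : ∀ T, Measurable (θtil T)
  νtil_meas : ∀ T, Measurable (νtil T)
  θtil_mem : ∀ T, 1 ≤ T → ∀ ω, θtil T ω ∈ closure Θ0
  νtil_mem : ∀ T, 1 ≤ T → ∀ ω, νtil T ω ∈ closure N0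
  q : ℝ
  γ : ℝ
  q_pos : 0 < q
  q_le_one : q ≤ 1
  γ_gt : -(1 - q) < γ
  α : ℝ → ℝ
  ε : ℝ → ℝ
  α_pos : ∀ T, 0 < α T
  ε_pos : ∀ T, 0 < ε T
  θhat : ℝ → Ω → EuclideanSpace ℝ (Fin p₀)
  νhat : ℝ → Ω → EuclideanSpace ℝ (Fin n₀)
  θhat_meas : ∀ T, Measurable (θhat T)
  νhat_meas : ∀ T, Measurable (νhat T)
  θhat_mem : ∀ T, 1 ≤ T → ∀ ω, θhat T ω ∈ closure Θ0
  νhat_mem : ∀ T, 1 ≤ T → ∀ ω, νhat T ω ∈ closure N0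

namespace POSetting

variable {Ω : Type} [MeasurableSpace Ω] {p₀ n₀ : ℕ}

/-- The random weight `κ^θ_{T,j} = α_T |ε_T + θtil_{T,j}|^{-γ}`. -/
def κθ (S : POSetting Ω p₀ n₀) (T : ℝ) (ω : Ω) (j : Fin p₀) : ℝ :=
  S.α T * |S.ε T + S.θtil T ω j| ^ (-S.γ)

/-- The random weight `κ^ν_{T,j} = α_T |ε_T + νtil_{T,j}|^{-γ}`. -/
def κν (S : POSetting Ω p₀ n₀) (T : ℝ) (ω : Ω) (j : Fin n₀) : ℝ :=
  S.α T * |S.ε T + S.νtil T ω j| ^ (-S.γ)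

/-- The penalized objective `Q^{(q)}_T(θ, ν)`. -/
def Q (S : POSetting Ω p₀ n₀) (T : ℝ) (ω : Ω)
    (θ : EuclideanSpace ℝ (Fin p₀)) (ν : EuclideanSpace ℝ (Fin n₀)) : ℝ :=
  (∑ j, ((θ j - S.θtil T ω j) ^ 2 + S.κθ T ω j * |θ j| ^ S.q))
    + ∑ j, ((ν j - S.νtil T ω j) ^ 2 + S.κν T ω j * |ν j| ^ S.q)

/-- `(θhat, νhat)` minimizes `Q^{(q)}_T` over `cl Θ0 × cl N0`, `P`-a.s. -/
def SecondStepMin (S : POSetting Ω p₀ n₀) : Prop :=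
  ∀ T : ℝ, 1 ≤ T → ∀ᵐ ω ∂S.P, ∀ θ ∈ closure S.Θ0, ∀ ν ∈ closure S.N0,
    S.Q T ω (S.θhat T ω) (S.νhat T ω) ≤ S.Q T ω θ ν

/-- `a_T = max_{j ∈ J¹} κ^θ_{T,j}`. -/
def aT (S : POSetting Ω p₀ n₀) (T : ℝ) (ω : Ω) : ℝ :=
  ⨆ j : {j : Fin p₀ // S.θstar j ≠ 0}, S.κθ T ω j

/-- `b_T = min_{j ∈ J⁰} κ^θ_{T,j}`. -/
def bT (S : POSetting Ω p₀ n₀) (T : ℝ) (ω : Ω) : ℝ :=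
  ⨅ j : {j : Fin p₀ // S.θstar j = 0}, S.κθ T ω j

/-- Assumption (i): `√T (θtil_T - θstar) = O_p(1)`. -/
def AssumptionI (S : POSetting Ω p₀ n₀) : Prop :=
  ∀ δ : ℝ, 0 < δ → ∃ M : ℝ, 0 < M ∧
    Filter.limsup (fun T : ℝ =>
        S.P {ω | Real.sqrt T * ‖S.θtil T ω - S.θstar‖ > M}) Filter.atTop
      < ENNReal.ofReal δ

/-- Assumption (i)': `√T (θtil_T - θstar)` is `L^{∞-}`-bounded. -/
def AssumptionI' (S : POSetting Ω p₀ n₀) : Prop :=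
  ∀ p : ℝ, 1 ≤ p → ∃ C : ℝ≥0∞, C < ⊤ ∧ ∀ T : ℝ, 1 ≤ T →
    ∫⁻ ω, ENNReal.ofReal (Real.sqrt T * ‖S.θtil T ω - S.θstar‖) ^ p ∂S.P ≤ C

/-- Assumption (ii): `√T a_T = O_p(1)` and `T^{(2-q)/2} b_T → ∞` in probability. -/
def AssumptionII (S : POSetting Ω p₀ n₀) : Prop :=
  (∀ δ : ℝ, 0 < δ → ∃ M : ℝ, 0 < M ∧
      Filter.limsup (fun T : ℝ =>
          S.P {ω | Real.sqrt T * S.aT T ω > M}) Filter.atTop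
        < ENNReal.ofReal δ)
    ∧ ∀ M : ℝ, Filter.Tendsto
        (fun T : ℝ => S.P {ω | T ^ ((2 - S.q) / 2) * S.bT T ω ≤ M})
        Filter.atTop (nhds 0)

/-- Assumption (iv): there is `ε ∈ (-1+q, γ)` with `T^{-(1+γ-ε)/2} α_T⁻¹` bounded. -/
def AssumptionIV (S : POSetting Ω p₀ n₀) : Prop :=
  ∃ e : ℝ, -1 + S.q < e ∧ e < S.γ ∧ ∃ C : ℝ, ∀ T : ℝ, 1 ≤ T →
    T ^ (-(1 + S.γ - e) / 2) * (S.α T)⁻¹ ≤ C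

/-- The event `Ĵ⁰_T = J⁰`, i.e. the second-step estimator selects exactly the
true zero coordinates. -/
def CorrectSelection (S : POSetting Ω p₀ n₀) (T : ℝ) (ω : Ω) : Prop :=
  ∀ j, S.θhat T ω j = 0 ↔ S.θstar j = 0

end POSetting

lemma aux_rpow {q s t : ℝ} (hq0 : 0 < q) (hq1 : q ≤ 1) (hs : 0 < s) (ht : 0 ≤ t) :
    s ^ q - t ^ q ≤ s ^ (q - 1) * |s - t| := by
  rcases le_or_gt s t with h | h
  · have h1 : s ^ q ≤ t ^ q := Real.rpow_le_rpow hs.le h hq0.le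
    have h2 : 0 ≤ s ^ (q - 1) * |s - t| :=
      mul_nonneg (Real.rpow_nonneg hs.le _) (abs_nonneg _)
    linarith
  · rw [abs_of_pos (by linarith)]
    have key : s ^ (q - 1) * t ≤ t ^ q := by
      rcases eq_or_lt_of_le ht with h0 | h0
      · simp [← h0, Real.zero_rpow hq0.ne']
      · have h1 : s ^ (q - 1) ≤ t ^ (q - 1) :=
          Real.rpow_le_rpow_of_nonpos h0 h.le (by linarith)
        calc s ^ (q - 1) * t ≤ t ^ (q - 1) * t := by nlinarith
          _ = t ^ q := by rw [← Real.rpow_add_one h0.ne']; ring_nf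
    have hss : s ^ (q - 1) * s = s ^ q := by
      rw [← Real.rpow_add_one hs.ne']; ring_nf
    nlinarith [key]

lemma aux_sum_sq {n : ℕ} (x : EuclideanSpace ℝ (Fin n)) :
    ∑ j, (x j) ^ 2 = ‖x‖ ^ 2 := by
  rw [EuclideanSpace.norm_eq, Real.sq_sqrt (by positivity)]
  simp [sq_abs]

lemma aux_abs_coord {n : ℕ} (x : EuclideanSpace ℝ (Fin n)) (j : Fin n) :
    |x j| ≤ ‖x‖ := by
  have h : (x j) ^ 2 ≤ ∑ i, (x i) ^ 2 :=
    Finset.single_le_sum (fun i _ => sq_nonneg (x i)) (Finset.mem_univ j)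
  rw [aux_sum_sq] at h
  nlinarith [abs_nonneg (x j), norm_nonneg x, sq_abs (x j)]

/-- **Theorem (√T-consistency of the second-step estimator).**
Under Assumptions (i) and (ii), `√T (θhat_T - θstar) = O_p(1)` as `T → ∞`:
for every `δ > 0` there is `M > 0` with
`limsup_{T→∞} P(√T |θhat_T - θstar| > M) < δ`. -/
theorem po_second_step_sqrtT_consistency
    {Ω : Type} [MeasurableSpace Ω] {p₀ n₀ : ℕ} (S : POSetting Ω p₀ n₀)
    (hmin : S.SecondStepMin) (hI : S.AssumptionI) (hII : S.AssumptionII) :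
    ∀ δ : ℝ, 0 < δ → ∃ M : ℝ, 0 < M ∧
      Filter.limsup (fun T : ℝ =>
          S.P {ω | Real.sqrt T * ‖S.θhat T ω - S.θstar‖ > M}) Filter.atTop
        < ENNReal.ofReal δ := by
  intro δ hδ
  obtain ⟨M1, hM1pos, hM1⟩ := hI (δ/3) (by linarith)
  obtain ⟨M2, hM2pos, hM2⟩ := hII.1 (δ/3) (by linarith)
  set K : ℝ := ∑ j : Fin p₀, |S.θstar j| ^ (S.q - 1) with hK
  have hKnn : 0 ≤ K := Finset.sum_nonneg fun j _ => Real.rpow_nonneg (abs_nonneg _) _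
  refine ⟨4*M1 + 2*K*M2 + 1, by positivity, ?_⟩
  set M : ℝ := 4*M1 + 2*K*M2 + 1 with hM
  haveI hJ1 : Nonempty {j : Fin p₀ // S.θstar j ≠ 0} :=
    ⟨⟨S.J1_ne.choose, S.J1_ne.choose_spec⟩⟩
  -- deterministic key estimate
  have key : ∀ T : ℝ, 1 ≤ T → ∀ ω : Ω,
      (∀ θ ∈ closure S.Θ0, ∀ ν ∈ closure S.N0,
        S.Q T ω (S.θhat T ω) (S.νhat T ω) ≤ S.Q T ω θ ν) →
      ‖S.θhat T ω - S.θstar‖ ≤ 2 * ‖S.θtil T ω - S.θstar‖ + K * S.aT T ω := by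
    intro T hT ω hω
    set u := ‖S.θhat T ω - S.θstar‖ with hu
    set v := ‖S.θtil T ω - S.θstar‖ with hv
    set a := S.aT T ω with ha
    have hκnn : ∀ j, 0 ≤ S.κθ T ω j := fun j =>
      mul_nonneg (S.α_pos T).le (Real.rpow_nonneg (abs_nonneg _) _)
    have hbdd : BddAbove (Set.range fun j : {j : Fin p₀ // S.θstar j ≠ 0} =>
        S.κθ T ω j) := Set.Finite.bddAbove (Set.finite_range _)
    have hann : 0 ≤ a := le_trans (hκnn _) (le_ciSup hbdd (Classical.arbitrary _))
    have hκle : ∀ j, S.θstar j ≠ 0 → S.κθ T ω j ≤ a := fun j hj =>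
      le_ciSup hbdd ⟨j, hj⟩
    have h1 := hω S.θstar S.θstar_mem (S.νhat T ω) (S.νhat_mem T hT ω)
    simp only [POSetting.Q] at h1
    have h2 := le_of_add_le_add_right h1
    have h3 : ∀ j, S.κθ T ω j * |S.θstar j| ^ S.q - S.κθ T ω j * |S.θhat T ω j| ^ S.q
        ≤ a * (|S.θstar j| ^ (S.q - 1) * u) := by
      intro j
      by_cases hj : S.θstar j = 0
      · have hz : |S.θstar j| ^ S.q = 0 := by
          rw [hj]; simp [Real.zero_rpow S.q_pos.ne']
        rw [hz]
        have h4 : 0 ≤ S.κθ T ω j * |S.θhat T ω j| ^ S.q :=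
          mul_nonneg (hκnn j) (Real.rpow_nonneg (abs_nonneg _) _)
        have h5 : 0 ≤ a * (|S.θstar j| ^ (S.q - 1) * u) :=
          mul_nonneg hann (mul_nonneg (Real.rpow_nonneg (abs_nonneg _) _) (norm_nonneg _))
        linarith
      · have hs : 0 < |S.θstar j| := abs_pos.2 hj
        have hd : |S.θstar j| ^ S.q - |S.θhat T ω j| ^ S.q
            ≤ |S.θstar j| ^ (S.q - 1) * u := by
          refine (aux_rpow S.q_pos S.q_le_one hs (abs_nonneg (S.θhat T ω j))).trans ?_
          have h5 : abs (|S.θstar j| - |S.θhat T ω j|) ≤ u := by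
            calc abs (|S.θstar j| - |S.θhat T ω j|)
                ≤ |S.θstar j - S.θhat T ω j| := abs_abs_sub_abs_le_abs_sub _ _
              _ = |(S.θhat T ω - S.θstar) j| := by
                  simp only [PiLp.sub_apply]; rw [abs_sub_comm]
              _ ≤ u := aux_abs_coord _ j
          exact mul_le_mul_of_nonneg_left h5 (Real.rpow_nonneg (abs_nonneg _) _)
        calc S.κθ T ω j * |S.θstar j| ^ S.q - S.κθ T ω j * |S.θhat T ω j| ^ S.q
            = S.κθ T ω j * (|S.θstar j| ^ S.q - |S.θhat T ω j| ^ S.q) := by ring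
          _ ≤ S.κθ T ω j * (|S.θstar j| ^ (S.q - 1) * u) :=
              mul_le_mul_of_nonneg_left hd (hκnn j)
          _ ≤ a * (|S.θstar j| ^ (S.q - 1) * u) :=
              mul_le_mul_of_nonneg_right (hκle j hj)
                (mul_nonneg (Real.rpow_nonneg (abs_nonneg _) _) (norm_nonneg _))
    have hsum : ∑ j, (S.κθ T ω j * |S.θstar j| ^ S.q - S.κθ T ω j * |S.θhat T ω j| ^ S.q)
        ≤ a * (K * u) := by
      calc _ ≤ ∑ j : Fin p₀, a * (|S.θstar j| ^ (S.q - 1) * u) :=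
            Finset.sum_le_sum fun j _ => h3 j
        _ = a * (K * u) := by rw [← Finset.mul_sum, ← Finset.sum_mul]
    have hw2 : ∑ j, (S.θhat T ω j - S.θtil T ω j) ^ 2
        = ‖S.θhat T ω - S.θtil T ω‖ ^ 2 := by
      rw [← aux_sum_sq (S.θhat T ω - S.θtil T ω)]
      simp [PiLp.sub_apply]
    have hv2 : ∑ j, (S.θstar j - S.θtil T ω j) ^ 2 = v ^ 2 := by
      rw [hv, ← norm_sub_rev, ← aux_sum_sq (S.θstar - S.θtil T ω)]
      simp [PiLp.sub_apply]
    rw [Finset.sum_add_distrib, Finset.sum_add_distrib] at h2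
    rw [Finset.sum_sub_distrib] at hsum
    set w := ‖S.θhat T ω - S.θtil T ω‖ with hwdef
    have hwv : w ^ 2 ≤ v ^ 2 + a * (K * u) := by
      rw [← hw2]; linarith
    have htri : u ≤ w + v := by
      rw [hu, hwdef, hv]
      have := norm_sub_le_norm_sub_add_norm_sub (S.θhat T ω) (S.θtil T ω) S.θstar
      linarith
    have hwnn : (0:ℝ) ≤ w := norm_nonneg _
    have hvnn : (0:ℝ) ≤ v := norm_nonneg _
    have hunn : (0:ℝ) ≤ u := norm_nonneg _
    have hKa : 0 ≤ K * a := mul_nonneg hKnn hann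
    by_contra hcon
    push_neg at hcon
    have hupos : 0 < u := lt_of_le_of_lt (by linarith) hcon
    have hwl : u - v ≤ w := by linarith
    have h7 : (u - v) ^ 2 ≤ w ^ 2 := by nlinarith
    nlinarith [mul_lt_mul_of_pos_left hcon hupos]
  -- probabilistic part
  have hev1 := Filter.eventually_lt_of_limsup_lt hM1
  have hev2 := Filter.eventually_lt_of_limsup_lt hM2
  have hev : ∀ᶠ T in Filter.atTop,
      S.P {ω | Real.sqrt T * ‖S.θhat T ω - S.θstar‖ > M}
        ≤ ENNReal.ofReal (δ/3) + ENNReal.ofReal (δ/3) := by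
    filter_upwards [hev1, hev2, Filter.eventually_ge_atTop (1:ℝ)] with T h1 h2 hT
    set A := {ω | Real.sqrt T * ‖S.θtil T ω - S.θstar‖ > M1} with hA
    set B := {ω | Real.sqrt T * S.aT T ω > M2} with hB
    set N := {ω | ¬ ∀ θ ∈ closure S.Θ0, ∀ ν ∈ closure S.N0,
        S.Q T ω (S.θhat T ω) (S.νhat T ω) ≤ S.Q T ω θ ν} with hN
    have hPN : S.P N = 0 := by
      have := hmin T hT
      rw [MeasureTheory.ae_iff] at this
      exact this
    have hsub : {ω | Real.sqrt T * ‖S.θhat T ω - S.θstar‖ > M} ⊆ A ∪ B ∪ N := by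
      intro ω hωmem
      by_cases hgood : ∀ θ ∈ closure S.Θ0, ∀ ν ∈ closure S.N0,
          S.Q T ω (S.θhat T ω) (S.νhat T ω) ≤ S.Q T ω θ ν
      · left
        by_contra hc
        simp only [Set.mem_union, hA, hB, Set.mem_setOf_eq, not_or, not_lt] at hc
        obtain ⟨hcA, hcB⟩ := hc
        have hkey := key T hT ω hgood
        have hst : (0:ℝ) ≤ Real.sqrt T := Real.sqrt_nonneg T
        have hωm : M < Real.sqrt T * ‖S.θhat T ω - S.θstar‖ := hωmem
        have hmul := mul_le_mul_of_nonneg_left hkey hst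
        have hKm := mul_le_mul_of_nonneg_left hcB hKnn
        nlinarith
      · right; exact hgood
    calc S.P {ω | Real.sqrt T * ‖S.θhat T ω - S.θstar‖ > M}
        ≤ S.P (A ∪ B ∪ N) := measure_mono hsub
      _ ≤ S.P (A ∪ B) + S.P N := measure_union_le _ _
      _ = S.P (A ∪ B) := by rw [hPN, add_zero]
      _ ≤ S.P A + S.P B := measure_union_le _ _
      _ ≤ ENNReal.ofReal (δ/3) + ENNReal.ofReal (δ/3) := add_le_add h1.le h2.le
  calc Filter.limsup (fun T : ℝ =>
        S.P {ω | Real.sqrt T * ‖S.θhat T ω - S.θstar‖ > M}) Filter.atTop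
      ≤ ENNReal.ofReal (δ/3) + ENNReal.ofReal (δ/3) := Filter.limsup_le_of_le (by isBoundedDefault) hev
    _ = ENNReal.ofReal (δ/3 + δ/3) := (ENNReal.ofReal_add (by linarith) (by linarith)).symm
    _ < ENNReal.ofReal δ := (ENNReal.ofReal_lt_ofReal_iff hδ).2 (by linarith)
end
end

section
/- If θ̂ ∈ S minimizes Q over S, then |θ̂ − θ̃|² ≤ |θ* − θ̃|² + Σ_{j∈J¹} κ_j |θ*_j|^q, and consequently |θ̂ − θ*| ≤ 2|θ̃ − θ*| + (Σ_{j∈J¹} κ_j |θ*_j|^q)^{1/2}, where |·| denotes the Euclidean norm. (This is the deterministic inequality underlying the √T-consistency of the second-step P-O estimator.) -/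
open scoped ENNReal

noncomputable section

open Classical in
/-- **Theorem (basic inequality for the penalized objective).**
Let `Q(θ) = Σ_j [(θ_j - θtil_j)² + κ_j |θ_j|^q]` with weights `κ_j > 0` and
`q ∈ (0,1]`, let `θstar ∈ S` have active set `J¹ = {j : θstar_j ≠ 0}`, and
suppose `θhat ∈ S` minimizes `Q` over `S`. Then
`|θhat - θtil|² ≤ |θstar - θtil|² + Σ_{j∈J¹} κ_j |θstar_j|^q`, and consequently
`|θhat - θstar| ≤ 2|θtil - θstar| + (Σ_{j∈J¹} κ_j |θstar_j|^q)^{1/2}`. -/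
theorem po_basic_inequality {p₀ : ℕ} (q : ℝ) (hq0 : 0 < q) (hq1 : q ≤ 1)
    (θtil θstar : EuclideanSpace ℝ (Fin p₀)) (κ : Fin p₀ → ℝ) (hκ : ∀ j, 0 < κ j)
    (S : Set (EuclideanSpace ℝ (Fin p₀))) (hstar : θstar ∈ S)
    (θhat : EuclideanSpace ℝ (Fin p₀)) (hhat : θhat ∈ S)
    (hmin : ∀ θ ∈ S,
      (∑ j, ((θhat j - θtil j) ^ 2 + κ j * |θhat j| ^ q))
        ≤ ∑ j, ((θ j - θtil j) ^ 2 + κ j * |θ j| ^ q)) :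
    ‖θhat - θtil‖ ^ 2 ≤ ‖θstar - θtil‖ ^ 2
        + ∑ j ∈ Finset.univ.filter (fun j => θstar j ≠ 0), κ j * |θstar j| ^ q
      ∧ ‖θhat - θstar‖ ≤ 2 * ‖θtil - θstar‖
        + Real.sqrt
            (∑ j ∈ Finset.univ.filter (fun j => θstar j ≠ 0), κ j * |θstar j| ^ q) := by

  classical
  set P := ∑ j ∈ Finset.univ.filter (fun j => θstar j ≠ 0), κ j * |θstar j| ^ q with hP
  have hPnn : 0 ≤ P := by
    apply Finset.sum_nonneg
    intro j _
    exact mul_nonneg (hκ j).le (Real.rpow_nonneg (abs_nonneg _) q)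
  have hnorm : ∀ x y : EuclideanSpace ℝ (Fin p₀),
      ‖x - y‖ ^ 2 = ∑ j, (x j - y j) ^ 2 := by
    intro x y
    rw [EuclideanSpace.norm_eq, Real.sq_sqrt (by positivity)]
    simp [PiLp.sub_apply, Real.norm_eq_abs, sq_abs]
  have hPfull : (∑ j, κ j * |θstar j| ^ q) = P := by
    rw [hP]
    rw [← Finset.sum_filter_add_sum_filter_not Finset.univ (fun j => θstar j ≠ 0)
      (fun j => κ j * |θstar j| ^ q)]
    have : ∑ j ∈ Finset.univ.filter (fun j => ¬ θstar j ≠ 0), κ j * |θstar j| ^ q = 0 := by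
      apply Finset.sum_eq_zero
      intro j hj
      simp only [Finset.mem_filter, not_not] at hj
      rw [hj.2]
      simp [Real.zero_rpow hq0.ne']
    rw [this, add_zero]
  have key := hmin θstar hstar
  rw [Finset.sum_add_distrib, Finset.sum_add_distrib, hPfull] at key
  have hpen : 0 ≤ ∑ j, κ j * |θhat j| ^ q := by
    apply Finset.sum_nonneg
    intro j _
    exact mul_nonneg (hκ j).le (Real.rpow_nonneg (abs_nonneg _) q)
  have h1 : ‖θhat - θtil‖ ^ 2 ≤ ‖θstar - θtil‖ ^ 2 + P := by
    rw [hnorm, hnorm]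
    linarith
  refine ⟨h1, ?_⟩
  have h2 : ‖θhat - θtil‖ ≤ ‖θstar - θtil‖ + Real.sqrt P := by
    nlinarith [norm_nonneg (θhat - θtil), norm_nonneg (θstar - θtil),
      Real.sqrt_nonneg P, Real.sq_sqrt hPnn]
  calc ‖θhat - θstar‖ ≤ ‖θhat - θtil‖ + ‖θtil - θstar‖ := norm_sub_le_norm_sub_add_norm_sub _ _ _
    _ ≤ (‖θstar - θtil‖ + Real.sqrt P) + ‖θtil - θstar‖ := by linarith
    _ = 2 * ‖θtil - θstar‖ + Real.sqrt P := by rw [norm_sub_rev θstar]; ring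
end
end

section
/- Suppose Assumption (i) holds, fix a ∈ (0, 1−q+γ), set α_T = T^{−(1+a)/2} and ε_T = T^{−1/2}, and assume in addition that cl(Θ⁰) ⊆ [0,∞)^{p₀}. Then T^{(2−q)/2} b_T → ∞ in probability as T → ∞, and ε := γ − a satisfies ε ∈ (−1+q, γ) and T^{−(1+γ−ε)/2} α_T^{−1} = 1 for all T, so Assumption (iv) holds. (Hence this hyperparameter choice satisfies Assumptions (ii) and (iv).) -/
open MeasureTheory Filter
open scoped ENNReal NNReal

noncomputable section

/-- **Theorem (the hyperparameter choice satisfies Assumptions (ii) and (iv)).**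
Under Assumption (i), with `a ∈ (0, 1-q+γ)`, `α_T = T^{-(1+a)/2}`,
`ε_T = T^{-1/2}`, and `cl Θ0 ⊆ [0,∞)^{p₀}`, one has
`T^{(2-q)/2} b_T → ∞` in probability, and `ε := γ - a` lies in `(-1+q, γ)` and
satisfies `T^{-(1+γ-ε)/2} α_T⁻¹ = 1` for all `T ≥ 1`, so Assumption (iv) holds. -/
theorem po_hyperparameter_bT_and_assumption_iv
    {Ω : Type} [MeasurableSpace Ω] {p₀ n₀ : ℕ} (S : POSetting Ω p₀ n₀)
    (hI : S.AssumptionI) (a : ℝ) (ha0 : 0 < a) (ha1 : a < 1 - S.q + S.γ)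
    (hα : ∀ T : ℝ, 1 ≤ T → S.α T = T ^ (-(1 + a) / 2))
    (hε : ∀ T : ℝ, 1 ≤ T → S.ε T = T ^ (-(1 : ℝ) / 2))
    (hΘ0nonneg : ∀ θ ∈ closure S.Θ0, ∀ j, 0 ≤ θ j) :
    (∀ M : ℝ, Filter.Tendsto
        (fun T : ℝ => S.P {ω | T ^ ((2 - S.q) / 2) * S.bT T ω ≤ M})
        Filter.atTop (nhds 0))
    ∧ (-1 + S.q < S.γ - a ∧ S.γ - a < S.γ
        ∧ ∀ T : ℝ, 1 ≤ T → T ^ (-(1 + S.γ - (S.γ - a)) / 2) * (S.α T)⁻¹ = 1) := by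

  have hq := S.q_pos
  have hc : 0 < (1 - S.q - a + S.γ) / 2 := by linarith
  set c : ℝ := (1 - S.q - a + S.γ) / 2 with hcdef
  set g : ℝ := max S.γ 0 with hgdef
  have hg0 : 0 ≤ g := le_max_right _ _
  have hgneg : -g ≤ 0 := neg_nonpos.mpr hg0
  haveI : Nonempty {j : Fin p₀ // S.θstar j = 0} := by
    obtain ⟨j, hj⟩ := S.J0_ne; exact ⟨⟨j, hj⟩⟩
  have coord_le : ∀ (x : EuclideanSpace ℝ (Fin p₀)) (j : Fin p₀), |x j| ≤ ‖x‖ := by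
    intro x j
    rw [EuclideanSpace.norm_eq]
    calc |x j| = Real.sqrt (|x j| ^ 2) := by rw [Real.sqrt_sq (abs_nonneg _)]
      _ ≤ Real.sqrt (∑ i, ‖x i‖ ^ 2) := by
          apply Real.sqrt_le_sqrt
          have : |x j| = ‖x j‖ := (Real.norm_eq_abs _).symm
          rw [this]
          exact Finset.single_le_sum (f := fun i => ‖x i‖ ^ 2) (fun i _ => sq_nonneg _) (Finset.mem_univ j)
  have key : ∀ T : ℝ, 1 ≤ T → ∀ ω : Ω,
      T ^ c * (1 + Real.sqrt T * ‖S.θtil T ω - S.θstar‖) ^ (-g)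
        ≤ T ^ ((2 - S.q) / 2) * S.bT T ω := by
    intro T hT ω
    have hT0 : (0:ℝ) < T := by linarith
    set X : ℝ := Real.sqrt T * ‖S.θtil T ω - S.θstar‖ with hXdef
    have hX0 : 0 ≤ X := mul_nonneg (Real.sqrt_nonneg _) (norm_nonneg _)
    have hεT : S.ε T = T ^ (-(1:ℝ)/2) := hε T hT
    have hεpos : 0 < S.ε T := S.ε_pos T
    have hεX : S.ε T * X = ‖S.θtil T ω - S.θstar‖ := by
      rw [hXdef, hεT, ← mul_assoc, Real.sqrt_eq_rpow, ← Real.rpow_add hT0]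
      norm_num
    have hεg : S.ε T ^ (-S.γ) = T ^ (S.γ / 2) := by
      rw [hεT, ← Real.rpow_mul hT0.le]
      congr 1; ring
    have hκ : ∀ j : {j : Fin p₀ // S.θstar j = 0},
        T ^ (-(1+a)/2) * (T ^ (S.γ/2) * (1+X) ^ (-g)) ≤ S.κθ T ω j := by
      rintro ⟨j, hj⟩
      have hnn : 0 ≤ S.θtil T ω j := hΘ0nonneg _ (S.θtil_mem T hT ω) j
      have hsum : 0 < S.ε T + S.θtil T ω j := by linarith
      have hcoord : S.θtil T ω j ≤ ‖S.θtil T ω - S.θstar‖ := by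
        have h := coord_le (S.θtil T ω - S.θstar) j
        have : (S.θtil T ω - S.θstar) j = S.θtil T ω j := by
          simp [hj]
        rw [this] at h
        exact le_trans (le_abs_self _) h
      have hub : S.ε T + S.θtil T ω j ≤ S.ε T * (1 + X) := by
        have : S.ε T * (1 + X) = S.ε T + S.ε T * X := by ring
        rw [this, hεX]; linarith
      have hmain : T ^ (S.γ/2) * (1+X) ^ (-g) ≤ |S.ε T + S.θtil T ω j| ^ (-S.γ) := by
        rw [abs_of_pos hsum]
        rcases le_total S.γ 0 with hγle | hγge
        · have hgz : g = 0 := max_eq_right hγle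
          rw [hgz, neg_zero, Real.rpow_zero, mul_one, ← hεg]
          exact Real.rpow_le_rpow hεpos.le (by linarith) (by linarith)
        · have hgz : g = S.γ := max_eq_left hγge
          rw [hgz, ← hεg, ← Real.mul_rpow hεpos.le (by linarith : (0:ℝ) ≤ 1 + X)]
          exact Real.rpow_le_rpow_of_nonpos hsum hub (by linarith)
      have : S.κθ T ω j = T ^ (-(1+a)/2) * |S.ε T + S.θtil T ω j| ^ (-S.γ) := by
        rw [POSetting.κθ, hα T hT]
      rw [this]
      exact mul_le_mul_of_nonneg_left hmain (Real.rpow_nonneg hT0.le _)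
    have hb : T ^ (-(1+a)/2) * (T ^ (S.γ/2) * (1+X) ^ (-g)) ≤ S.bT T ω := le_ciInf hκ
    have hrw : T ^ ((2 - S.q)/2) * (T ^ (-(1+a)/2) * T ^ (S.γ/2)) = T ^ c := by
      rw [← Real.rpow_add hT0, ← Real.rpow_add hT0, hcdef]
      congr 1; ring
    calc T ^ c * (1+X) ^ (-g)
        = T ^ ((2 - S.q)/2) * (T ^ (-(1+a)/2) * (T ^ (S.γ/2) * (1+X) ^ (-g))) := by
          rw [← hrw]; ring
      _ ≤ T ^ ((2 - S.q)/2) * S.bT T ω :=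
          mul_le_mul_of_nonneg_left hb (Real.rpow_nonneg hT0.le _)
  constructor
  · intro M
    rw [ENNReal.tendsto_nhds_zero]
    intro δ' hδ'
    obtain ⟨δ, hδpos, hδle⟩ : ∃ δ : ℝ, 0 < δ ∧ ENNReal.ofReal δ ≤ δ' := by
      rcases eq_or_ne δ' ⊤ with h | h
      · exact ⟨1, one_pos, by simp [h]⟩
      · exact ⟨δ'.toReal, ENNReal.toReal_pos hδ'.ne' h,
          le_of_eq (ENNReal.ofReal_toReal h)⟩
    obtain ⟨M', hM'pos, hlimsup⟩ := hI δ hδpos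
    have hev1 : ∀ᶠ T : ℝ in Filter.atTop,
        S.P {ω | Real.sqrt T * ‖S.θtil T ω - S.θstar‖ > M'} < ENNReal.ofReal δ :=
      Filter.eventually_lt_of_limsup_lt hlimsup
    have hKpos : (0:ℝ) < (1 + M') ^ (-g) := Real.rpow_pos_of_pos (by linarith) _
    have hev2 : ∀ᶠ T : ℝ in Filter.atTop, M < T ^ c * (1 + M') ^ (-g) :=
      ((tendsto_rpow_atTop hc).atTop_mul_const hKpos).eventually_gt_atTop M
    have hev3 : ∀ᶠ T : ℝ in Filter.atTop, (1:ℝ) ≤ T := Filter.eventually_ge_atTop 1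
    filter_upwards [hev1, hev2, hev3] with T h1 h2 h3
    refine le_trans (le_trans (measure_mono ?_) h1.le) hδle
    intro ω hω
    simp only [Set.mem_setOf_eq] at hω ⊢
    by_contra hcon
    push_neg at hcon
    set X : ℝ := Real.sqrt T * ‖S.θtil T ω - S.θstar‖ with hXdef
    have hX0 : 0 ≤ X := mul_nonneg (Real.sqrt_nonneg _) (norm_nonneg _)
    have hmono : (1 + M') ^ (-g) ≤ (1 + X) ^ (-g) :=
      Real.rpow_le_rpow_of_nonpos (by linarith) (by linarith) hgneg
    have hT0 : (0:ℝ) < T := by linarith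
    have hTc : (0:ℝ) ≤ T ^ c := (Real.rpow_pos_of_pos hT0 c).le
    have := key T h3 ω
    nlinarith [mul_le_mul_of_nonneg_left hmono hTc]
  · refine ⟨by linarith, by linarith, fun T hT => ?_⟩
    rw [hα T hT]
    have h1 : (-(1 + S.γ - (S.γ - a)) / 2 : ℝ) = -(1+a)/2 := by ring
    rw [h1, mul_inv_cancel₀]
    exact (Real.rpow_pos_of_pos (by linarith) _).ne'
end
end

section
/- Let (X_T)_{T≥1} and (Y_T)_{T≥1} be families of ℝ^k-valued random vectors such that: (a) there is a constant D > 0 with |X_T| ≤ D almost surely for every T ≥ 1; (b) (√T Y_T)_{T≥1} is L^{∞−}-bounded; and (c) for every L > 0 there is C_L > 0 with P(X_T ≠ Y_T) ≤ C_L T^{−L} for all T ≥ 1. Then (√T X_T)_{T≥1} is L^{∞−}-bounded. (This transfer lemma yields the L^{∞−}-boundedness of the P-O estimator from that of the oracle estimator via the polynomial correct-selection bound.) -/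
/-!
Off the event `{X_T ≠ Y_T}` the moments of `√T X_T` are those of `√T Y_T`. On it,
`|√T X_T|^p ≤ T^{p/2} D^p`, and choosing `L = p/2` in the correct-selection bound makes
the probability `C T^{-p/2}` of the event cancel this growth exactly.
-/

open MeasureTheory
open scoped ENNReal

namespace MeasureTheory

/-- No measurability is needed: the set `{f ≠ g}` is replaced by a measurable hull. -/
theorem lintegral_le_lintegral_add_mul_measure_ne {α : Type*} [MeasurableSpace α]
    {μ : Measure α} {f g : α → ℝ≥0∞} {c : ℝ≥0∞} (hf : ∀ᵐ a ∂μ, f a ≤ c) :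
    ∫⁻ a, f a ∂μ ≤ ∫⁻ a, g a ∂μ + c * μ {a | f a ≠ g a} := by
  set S := toMeasurable μ {a | f a ≠ g a}
  have hS : MeasurableSet S := measurableSet_toMeasurable _ _
  calc ∫⁻ a, f a ∂μ ≤ ∫⁻ a, g a + S.indicator (fun _ ↦ c) a ∂μ := by
        refine lintegral_mono_ae (hf.mono fun a ha ↦ ?_)
        by_cases hfg : f a = g a
        · simp [hfg]
        · rw [Set.indicator_of_mem (subset_toMeasurable _ _ hfg)]
          exact ha.trans le_add_self
    _ = ∫⁻ a, g a ∂μ + c * μ {a | f a ≠ g a} := by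
        rw [lintegral_add_right _ (measurable_const.indicator hS),
          lintegral_indicator_const hS, measure_toMeasurable]

end MeasureTheory

theorem ENNReal.ofReal_sqrt_rpow_mul_ofReal_rpow_neg_half {T : ℝ} (hT : 0 < T) {p : ℝ}
    (hp : 0 ≤ p) : ENNReal.ofReal (√T) ^ p * ENNReal.ofReal (T ^ (-(p / 2))) = 1 := by
  rw [ENNReal.ofReal_rpow_of_nonneg (Real.sqrt_nonneg T) hp,
    ← ENNReal.ofReal_mul (Real.rpow_nonneg (Real.sqrt_nonneg T) p), Real.sqrt_eq_rpow,
    ← Real.rpow_mul hT.le, ← Real.rpow_add hT, show 1 / 2 * p + -(p / 2) = 0 by ring,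
    Real.rpow_zero, ENNReal.ofReal_one]

theorem transfer_Linfty_minus_bounded_general
    {Ω : Type} [MeasurableSpace Ω] (P : Measure Ω) [IsProbabilityMeasure P]
    (k : ℕ) (X Y : ℝ → Ω → EuclideanSpace ℝ (Fin k))
    (D : ℝ)
    (hXbdd : ∀ T : ℝ, 1 ≤ T → ∀ᵐ ω ∂P, ‖X T ω‖ ≤ D)
    (hY : ∀ p : ℝ, 1 ≤ p → ∃ C : ℝ≥0∞, C < ⊤ ∧ ∀ T : ℝ, 1 ≤ T →
      ∫⁻ ω, ENNReal.ofReal (Real.sqrt T * ‖Y T ω‖) ^ p ∂P ≤ C)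
    (hXY : ∀ L : ℝ, 0 < L → ∃ C : ℝ, 0 < C ∧ ∀ T : ℝ, 1 ≤ T →
      P {ω | X T ω ≠ Y T ω} ≤ ENNReal.ofReal (C * T ^ (-L))) :
    ∀ p : ℝ, 1 ≤ p → ∃ C : ℝ≥0∞, C < ⊤ ∧ ∀ T : ℝ, 1 ≤ T →
      ∫⁻ ω, ENNReal.ofReal (Real.sqrt T * ‖X T ω‖) ^ p ∂P ≤ C := by
  intro p hp
  have hp0 : 0 ≤ p := by linarith
  obtain ⟨CY, hCY, hCY_bound⟩ := hY p hp
  obtain ⟨C, hC, hC_bound⟩ := hXY (p / 2) (by linarith)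
  refine ⟨CY + ENNReal.ofReal D ^ p * ENNReal.ofReal C, by finiteness, fun T hT ↦ ?_⟩
  have hX_le : ∀ᵐ ω ∂P, ENNReal.ofReal (√T * ‖X T ω‖) ^ p
      ≤ ENNReal.ofReal (√T) ^ p * ENNReal.ofReal D ^ p := by
    filter_upwards [hXbdd T hT] with ω hω
    rw [ENNReal.ofReal_mul (Real.sqrt_nonneg T), ENNReal.mul_rpow_of_nonneg _ _ hp0]
    gcongr
  have h_ne : {ω | ENNReal.ofReal (√T * ‖X T ω‖) ^ p ≠ ENNReal.ofReal (√T * ‖Y T ω‖) ^ p}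
      ⊆ {ω | X T ω ≠ Y T ω} := fun ω hω hXYω ↦ hω (by rw [hXYω])
  calc ∫⁻ ω, ENNReal.ofReal (√T * ‖X T ω‖) ^ p ∂P
      ≤ ∫⁻ ω, ENNReal.ofReal (√T * ‖Y T ω‖) ^ p ∂P +
          ENNReal.ofReal (√T) ^ p * ENNReal.ofReal D ^ p * P {ω | X T ω ≠ Y T ω} :=
        (lintegral_le_lintegral_add_mul_measure_ne hX_le).trans (by gcongr)
    _ ≤ CY + ENNReal.ofReal (√T) ^ p * ENNReal.ofReal D ^ p *
          (ENNReal.ofReal C * ENNReal.ofReal (T ^ (-(p / 2)))) := by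
        rw [← ENNReal.ofReal_mul hC.le]
        gcongr
        exacts [hCY_bound T hT, hC_bound T hT]
    _ = CY + ENNReal.ofReal D ^ p * ENNReal.ofReal C *
          (ENNReal.ofReal (√T) ^ p * ENNReal.ofReal (T ^ (-(p / 2)))) := by ring
    _ = CY + ENNReal.ofReal D ^ p * ENNReal.ofReal C := by
        rw [ENNReal.ofReal_sqrt_rpow_mul_ofReal_rpow_neg_half (by linarith) hp0, mul_one]

/-- **Theorem (transfer of `L^{∞-}`-boundedness along a polynomially
negligible exceptional event).** Let `(X_T)` and `(Y_T)` be families of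
`ℝ^k`-valued random vectors such that (a) `|X_T| ≤ D` a.s. for all `T ≥ 1`,
(b) `(√T Y_T)` is `L^{∞-}`-bounded, and (c) for every `L > 0` there is
`C_L > 0` with `P(X_T ≠ Y_T) ≤ C_L T^{-L}` for all `T ≥ 1`. Then
`(√T X_T)` is `L^{∞-}`-bounded. -/
theorem transfer_Linfty_minus_bounded
    {Ω : Type} [MeasurableSpace Ω] (P : Measure Ω) [IsProbabilityMeasure P]
    (k : ℕ) (X Y : ℝ → Ω → EuclideanSpace ℝ (Fin k))
    (hXmeas : ∀ T, Measurable (X T)) (hYmeas : ∀ T, Measurable (Y T))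
    (D : ℝ) (hD : 0 < D)
    (hXbdd : ∀ T : ℝ, 1 ≤ T → ∀ᵐ ω ∂P, ‖X T ω‖ ≤ D)
    (hY : ∀ p : ℝ, 1 ≤ p → ∃ C : ℝ≥0∞, C < ⊤ ∧ ∀ T : ℝ, 1 ≤ T →
      ∫⁻ ω, ENNReal.ofReal (Real.sqrt T * ‖Y T ω‖) ^ p ∂P ≤ C)
    (hXY : ∀ L : ℝ, 0 < L → ∃ C : ℝ, 0 < C ∧ ∀ T : ℝ, 1 ≤ T →
      P {ω | X T ω ≠ Y T ω} ≤ ENNReal.ofReal (C * T ^ (-L))) :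
    ∀ p : ℝ, 1 ≤ p → ∃ C : ℝ≥0∞, C < ⊤ ∧ ∀ T : ℝ, 1 ≤ T →
      ∫⁻ ω, ENNReal.ofReal (Real.sqrt T * ‖X T ω‖) ^ p ∂P ≤ C :=
  transfer_Linfty_minus_bounded_general P k X Y D hXbdd hY hXY
end
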